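/- arXiv:1705.03641 — 2 statements merged into one kernel-verified Lean document; each statement's English description precedes it below -/
import Mathlib

section
/- Let M, K : [0,∞) → [2,∞) be continuous increasing functions, set M_K(s) = M(s)·log(K(s)), and let w_{M_K}(t) = M_K^{-1}(t) for t ≥ M_K(1) (the right-continuous right-inverse) and w_{M_K}(t) = 1 otherwise. Assume K(s) ≥ M(s) for all s ≥ 1. Then there exists δ > 0 such that K(w_{M_K}(t)) ≥ t^δ for all sufficiently large t. -/
open Set

/-- Let `M, K : [0,∞) → [2,∞)` be continuous increasing functions with
`K s ≥ max s (M s)` for `s > 1`. Set `M_K s = M s * log (K s)` and let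
`w` be the right-continuous right-inverse of `M_K` (extended by `1` below `M_K 1`).
Then there is `δ > 0` with `K (w t) ≥ t ^ δ` for all sufficiently large `t`. -/
theorem stmt_2 (M K : ℝ → ℝ)
    (hM2 : ∀ s ≥ (0 : ℝ), 2 ≤ M s) (hK2 : ∀ s ≥ (0 : ℝ), 2 ≤ K s)
    (hMc : ContinuousOn M (Ici 0)) (hKc : ContinuousOn K (Ici 0))
    (hMm : MonotoneOn M (Ici 0)) (hKm : MonotoneOn K (Ici 0))
    (hKM : ∀ s > (1 : ℝ), max s (M s) ≤ K s)
    (MK : ℝ → ℝ) (hMK : ∀ s, MK s = M s * Real.log (K s))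
    (w : ℝ → ℝ)
    (hw : ∀ t, w t = if MK 1 ≤ t then sSup {s : ℝ | 0 ≤ s ∧ MK s = t} else 1) :
    ∃ δ > (0 : ℝ), ∃ t₀ : ℝ, ∀ t ≥ t₀, t ^ δ ≤ K (w t) := by
  refine ⟨1/2, by norm_num, MK 1 + 1, fun t ht => ?_⟩
  have hK1 : (2:ℝ) ≤ K 1 := hK2 1 (by norm_num)
  have hlog2 : (0:ℝ) < Real.log 2 := Real.log_pos (by norm_num)
  have hMK1 : (0:ℝ) < MK 1 := by
    rw [hMK]
    have h2 : Real.log 2 ≤ Real.log (K 1) := Real.log_le_log (by norm_num) hK1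
    have := hM2 1 (by norm_num)
    nlinarith
  have ht0 : (0:ℝ) < t := by linarith
  have hMKc : ContinuousOn MK (Ici 0) := by
    have : ContinuousOn (fun s => M s * Real.log (K s)) (Ici 0) :=
      hMc.mul (hKc.log (fun s hs => by have := hK2 s hs; linarith))
    exact this.congr (fun s _ => hMK s)
  have hMKm : MonotoneOn MK (Ici 0) := by
    intro a ha b hb hab
    rw [hMK, hMK]
    have hKa := hK2 a ha
    have h1 : Real.log (K a) ≤ Real.log (K b) := Real.log_le_log (by linarith) (hKm ha hb hab)
    have h2 : 0 ≤ Real.log (K a) := Real.log_nonneg (by linarith)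
    have := hM2 a ha
    nlinarith [hMm ha hb hab]
  have hexp : (1:ℝ) < Real.exp t := by
    rw [← Real.exp_zero]; exact Real.exp_lt_exp.mpr ht0
  have hexp0 : (0:ℝ) ≤ Real.exp t := (Real.exp_pos t).le
  have hMKbig : 2 * t ≤ MK (Real.exp t) := by
    rw [hMK]
    have hKe : Real.exp t ≤ K (Real.exp t) := le_trans (le_max_left _ _) (hKM _ hexp)
    have hlogKe : t ≤ Real.log (K (Real.exp t)) := by
      calc t = Real.log (Real.exp t) := (Real.log_exp t).symm
        _ ≤ _ := Real.log_le_log (Real.exp_pos t) hKe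
    have hM := hM2 (Real.exp t) hexp0
    nlinarith
  -- the solution set
  set S : Set ℝ := {s : ℝ | 0 ≤ s ∧ MK s = t} with hS
  have h1exp : (1:ℝ) ≤ Real.exp t := hexp.le
  obtain ⟨s, hsmem, hst⟩ : ∃ s ∈ Icc (1:ℝ) (Real.exp t), MK s = t := by
    have := intermediate_value_Icc h1exp (hMKc.mono (fun x hx => le_trans (by norm_num) hx.1))
    have hmem : t ∈ Icc (MK 1) (MK (Real.exp t)) := ⟨by linarith, by linarith⟩
    obtain ⟨s, hs1, hs2⟩ := this hmem
    exact ⟨s, hs1, hs2⟩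
  have hSne : S.Nonempty := ⟨s, by constructor <;> [linarith [hsmem.1]; exact hst]⟩
  have hSbdd : BddAbove S := by
    refine ⟨Real.exp t, fun x hx => ?_⟩
    by_contra hlt
    push_neg at hlt
    have : MK (Real.exp t) ≤ MK x := hMKm hexp0 (le_trans hexp0 hlt.le) hlt.le
    have := hx.2
    linarith
  have hSclosed : IsClosed S := by
    have : S = Ici 0 ∩ MK ⁻¹' {t} := by ext x; simp [hS, mem_Ici, and_comm]
    rw [this]
    exact hMKc.preimage_isClosed_of_isClosed isClosed_Ici isClosed_singleton
  have hwt : w t ∈ S := by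
    rw [hw, if_pos (by linarith : MK 1 ≤ t)]
    exact hSclosed.csSup_mem hSne hSbdd
  obtain ⟨hwt0, hwtMK⟩ := hwt
  have hwt1 : 1 < w t := by
    by_contra hle
    push_neg at hle
    have : MK (w t) ≤ MK 1 := hMKm hwt0 (by norm_num) hle
    linarith
  have hKw := hKM (w t) hwt1
  have hKw2 : (2:ℝ) ≤ K (w t) := hK2 _ hwt0
  have hMw : M (w t) ≤ K (w t) := le_trans (le_max_right _ _) hKw
  have hlogKw : 0 ≤ Real.log (K (w t)) := Real.log_nonneg (by linarith)
  have hloK : Real.log (K (w t)) ≤ K (w t) := Real.log_le_self (by linarith)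
  have hMwt0 : 2 ≤ M (w t) := hM2 _ hwt0
  have htK2 : t ≤ K (w t) ^ 2 := by
    have := hMK (w t)
    nlinarith
  calc t ^ (1/2 : ℝ) = Real.sqrt t := by
        rw [Real.sqrt_eq_rpow]
    _ ≤ Real.sqrt (K (w t) ^ 2) := Real.sqrt_le_sqrt htK2
    _ = K (w t) := by
        rw [Real.sqrt_sq (by linarith)]
end

section
/- Let X be a Banach space and F : ℝ → X a smooth function such that ‖F^{(j)}(s)‖ ≤ j! · K(|s|) · M(|s|)^j for all j ∈ ℕ and s ∈ ℝ, where M, K : [0,∞) → [2,∞) are continuous and increasing. Then for every ε ∈ (0,1), F extends analytically to the set Ω = {z ∈ ℂ : |Im z| arbitrary, 0 > Re z > -(1-ε)/M(|Im z|)} ∪ ℂ₊ and satisfies ‖F(z)‖ ≤ ε^{-1} K(|Im z|) for all z with |Re z| < (1-ε)/M(|Im z|), via the Taylor series F(z) = ∑_{j≥0} F^{(j)}(i s)(z - is)^j / j! with s = Im z. -/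
open Set

/-- If `F : ℝ → X` is smooth with `‖F^{(j)}(s)‖ ≤ j! K(|s|) M(|s|)^j`, then for every
`ε ∈ (0,1)` and every `z` with `|Re z| < (1-ε)/M(|Im z|)`, the Taylor series of `F`
centered at `i Im z` converges absolutely and its sum has norm at most `K(|Im z|)/ε`. -/
theorem stmt_7 {X : Type*} [NormedAddCommGroup X] [NormedSpace ℂ X]
    (M K : ℝ → ℝ)
    (hM2 : ∀ s ≥ (0 : ℝ), 2 ≤ M s) (hK2 : ∀ s ≥ (0 : ℝ), 2 ≤ K s)
    (hMc : ContinuousOn M (Ici 0)) (hKc : ContinuousOn K (Ici 0))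
    (hMm : MonotoneOn M (Ici 0)) (hKm : MonotoneOn K (Ici 0))
    (F : ℝ → X) (hF : ContDiff ℝ (⊤ : ℕ∞) F)
    (hbd : ∀ (j : ℕ) (s : ℝ),
      ‖iteratedDeriv j F s‖ ≤ (j.factorial : ℝ) * K |s| * M |s| ^ j)
    (ε : ℝ) (hε : ε ∈ Ioo (0 : ℝ) 1) :
    ∀ z : ℂ, |z.re| < (1 - ε) / M |z.im| →
      Summable (fun j : ℕ =>
        ‖(((j.factorial : ℂ))⁻¹ * (z - Complex.I * (z.im : ℂ)) ^ j) •
          iteratedDeriv j F z.im‖) ∧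
      ‖∑' j : ℕ, (((j.factorial : ℂ))⁻¹ * (z - Complex.I * (z.im : ℂ)) ^ j) •
          iteratedDeriv j F z.im‖ ≤ K |z.im| / ε := by
  intro z hz
  set s := z.im with hs
  have hM : (2:ℝ) ≤ M |s| := hM2 _ (abs_nonneg _)
  have hMpos : (0:ℝ) < M |s| := by linarith
  have hKpos : (0:ℝ) < K |s| := by have := hK2 _ (abs_nonneg s); linarith
  set r := |z.re| * M |s| with hr
  have hr0 : 0 ≤ r := mul_nonneg (abs_nonneg _) hMpos.le
  have hrlt : r < 1 - ε := (lt_div_iff₀ hMpos).mp hz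
  have hr1 : r < 1 := by have := hε.1; linarith
  have hεr : ε ≤ 1 - r := by linarith
  have hzz : z - Complex.I * (s:ℂ) = (z.re : ℂ) := by
    apply Complex.ext <;> simp [hs]
  have habs : ∀ j : ℕ,
      ‖(((j.factorial : ℂ))⁻¹ * (z - Complex.I * (s:ℂ)) ^ j) • iteratedDeriv j F s‖
        ≤ K |s| * r ^ j := by
    intro j
    rw [norm_smul, hzz]
    have h1 : ‖((j.factorial : ℂ))⁻¹ * (z.re:ℂ)^j‖ = (j.factorial : ℝ)⁻¹ * |z.re|^j := by
      rw [norm_mul, norm_inv, norm_pow]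
      simp [Complex.norm_natCast, Complex.norm_real, Real.norm_eq_abs]
    rw [h1]
    have hfac : (0:ℝ) < (j.factorial : ℝ) := Nat.cast_pos.mpr j.factorial_pos
    calc (j.factorial : ℝ)⁻¹ * |z.re|^j * ‖iteratedDeriv j F s‖
        ≤ (j.factorial : ℝ)⁻¹ * |z.re|^j * ((j.factorial : ℝ) * K |s| * M |s| ^ j) := by
          apply mul_le_mul_of_nonneg_left (hbd j s)
          positivity
      _ = K |s| * r ^ j := by
          rw [hr, mul_pow]
          field_simp
  have hgeom : Summable (fun j : ℕ => K |s| * r ^ j) :=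
    (summable_geometric_of_lt_one hr0 hr1).mul_left _
  have hsum : Summable (fun j : ℕ =>
      ‖(((j.factorial : ℂ))⁻¹ * (z - Complex.I * (s:ℂ)) ^ j) • iteratedDeriv j F s‖) :=
    Summable.of_nonneg_of_le (fun j => norm_nonneg _) habs hgeom
  refine ⟨hsum, ?_⟩
  calc ‖∑' j : ℕ, (((j.factorial : ℂ))⁻¹ * (z - Complex.I * (s:ℂ)) ^ j) • iteratedDeriv j F s‖
      ≤ ∑' j : ℕ, ‖(((j.factorial : ℂ))⁻¹ * (z - Complex.I * (s:ℂ)) ^ j) • iteratedDeriv j F s‖ :=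
        norm_tsum_le_tsum_norm hsum
    _ ≤ ∑' j : ℕ, K |s| * r ^ j := Summable.tsum_le_tsum habs hsum hgeom
    _ = K |s| * (1 - r)⁻¹ := by rw [tsum_mul_left, tsum_geometric_of_lt_one hr0 hr1]
    _ ≤ K |s| / ε := by
        rw [div_eq_mul_inv]
        apply mul_le_mul_of_nonneg_left _ hKpos.le
        exact inv_anti₀ hε.1 hεr
end
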